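/- Let n ≥ 1 and let S be a (1/2, 4√2)-smooth set of n² points in the unit square U = [0,1]². Let i ≥ 1, let R = C(i, j, m) be a basic square of the grid G_i(U), and let R' = C(i−1, ⌊j/2⌋, ⌊m/2⌋) be its parent in G_{i−1}(U). If more than 100n points of S lie in TL_{i−1}(R'), then R contains at least one point of S. -/

import Mathlib

open scoped Classical

/-- The Euclidean plane. -/
abbrev E2 := EuclideanSpace ℝ (Fin 2)

/-- The closed axis-aligned square `[a, a+ℓ] × [b, b+ℓ]`. -/
def square (a b ℓ : ℝ) : Set E2 :=
  {p | p 0 ∈ Set.Icc a (a + ℓ) ∧ p 1 ∈ Set.Icc b (b + ℓ)}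

/-- The closed unit square `U = [0,1]²`. -/
def unitSq : Set E2 := square 0 0 1

/-- The basic square `C(i, j, m) = [j/2^i, (j+1)/2^i] × [m/2^i, (m+1)/2^i]`
of the grid `G_i(U)`. -/
def cell (i j m : ℕ) : Set E2 :=
  square ((j : ℝ) / 2 ^ i) ((m : ℝ) / 2 ^ i) (1 / 2 ^ i)

/-- `TL_i(C(i, j, m))`: the union of all basic squares `C(i, jQ, mQ)` of `G_i(U)`
with `|jQ − j| ≤ 2` and `|mQ − m| ≤ 2`; i.e. the basic square together with the
(up to) two layers of basic squares around it within `U`. -/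
def TLcell (i j m : ℕ) : Set E2 :=
  {p | ∃ jQ mQ : ℕ, jQ < 2 ^ i ∧ mQ < 2 ^ i ∧
    jQ ≤ j + 2 ∧ j ≤ jQ + 2 ∧ mQ ≤ m + 2 ∧ m ≤ mQ + 2 ∧ p ∈ cell i jQ mQ}

/-- A finite set `S` of points in the unit square is `(ε, d)`-smooth if for any two
axis-aligned squares `Q`, `R` of equal side length `ℓ` contained in the unit square,
if `Q` contains at least `|S|^ε` points of `S` and the distance between `Q` and `R`
is at most `d·ℓ` (i.e. some pair of points, one in each, is at distance `≤ d·ℓ`),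
then `R` contains at least one point of `S`. -/
def IsSmooth (ε d : ℝ) (S : Finset E2) : Prop :=
  ∀ ℓ a b a' b' : ℝ, 0 < ℓ →
    square a b ℓ ⊆ unitSq → square a' b' ℓ ⊆ unitSq →
    ((S.card : ℝ) ^ ε ≤ ((S.filter (fun p => p ∈ square a b ℓ)).card : ℝ)) →
    (∃ q ∈ square a b ℓ, ∃ r ∈ square a' b' ℓ, dist q r ≤ d * ℓ) →
    ∃ p ∈ S, p ∈ square a' b' ℓ

/-- A basic cell of the grid is contained in the unit square. -/
lemma cell_subset_unitSq (i j m : ℕ) (hj : j < 2 ^ i) (hm : m < 2 ^ i) :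
    cell i j m ⊆ unitSq := by
  intro p hp
  obtain ⟨⟨hx1, hx2⟩, ⟨hy1, hy2⟩⟩ := hp
  have h2 : (0:ℝ) < 2 ^ i := by positivity
  have hj' : (j:ℝ) + 1 ≤ 2 ^ i := by exact_mod_cast Nat.succ_le_of_lt hj
  have hm' : (m:ℝ) + 1 ≤ 2 ^ i := by exact_mod_cast Nat.succ_le_of_lt hm
  have hj0 : (0:ℝ) ≤ (j:ℝ) := Nat.cast_nonneg j
  have hm0 : (0:ℝ) ≤ (m:ℝ) := Nat.cast_nonneg m
  constructor
  · constructor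
    · have : (0:ℝ) ≤ (j:ℝ)/2^i := by positivity
      linarith
    · have : (j:ℝ)/2^i + 1/2^i ≤ 1 := by
        rw [← add_div, div_le_one h2]; linarith
      simpa using le_trans hx2 this
  · constructor
    · have : (0:ℝ) ≤ (m:ℝ)/2^i := by positivity
      linarith
    · have : (m:ℝ)/2^i + 1/2^i ≤ 1 := by
        rw [← add_div, div_le_one h2]; linarith
      simpa using le_trans hy2 this

/-- Halving a coordinate interval: a point of a level-`k` interval lies in one of the
two level-`k+1` child intervals. -/
lemma child_interval (k a : ℕ) (x : ℝ)
    (hx : x ∈ Set.Icc ((a:ℝ)/2^k) ((a:ℝ)/2^k + 1/2^k)) (ha : a < 2^k) :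
    ∃ c : ℕ, c / 2 = a ∧ c < 2^(k+1) ∧
      x ∈ Set.Icc ((c:ℝ)/2^(k+1)) ((c:ℝ)/2^(k+1) + 1/2^(k+1)) := by
  have h2 : (0:ℝ) < 2 ^ (k+1) := by positivity
  have hk : (2:ℝ)^(k+1) = 2 * 2^k := by ring
  have e1 : (a:ℝ)/2^k = (2*a : ℕ)/2^(k+1) := by
    push_cast; rw [hk]; field_simp
  have e2 : (a:ℝ)/2^k + 1/2^k = ((2*a+1 : ℕ):ℝ)/2^(k+1) + 1/2^(k+1) := by
    push_cast; rw [hk]; field_simp; ring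
  by_cases h : x ≤ ((2*a+1 : ℕ):ℝ)/2^(k+1)
  · refine ⟨2*a, by omega, by omega, ?_, ?_⟩
    · rw [← e1]; exact hx.1
    · have : ((2*a+1:ℕ):ℝ)/2^(k+1) = ((2*a:ℕ):ℝ)/2^(k+1) + 1/2^(k+1) := by
        push_cast; ring
      rw [← this]; exact h
  · refine ⟨2*a+1, by omega, by omega, le_of_lt (not_le.mp h), ?_⟩
    rw [← e2]; exact hx.2

/-- Two intervals of length `ℓ` whose left endpoints are at index distance at most 5
contain points at distance at most `4ℓ`. -/
lemma close_coords (u v : ℕ) (ℓ : ℝ) (hℓ : 0 < ℓ) (h1 : u ≤ v + 5) (h2 : v ≤ u + 5) :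
    ∃ x x', x ∈ Set.Icc ((u:ℝ)*ℓ) ((u:ℝ)*ℓ+ℓ) ∧ x' ∈ Set.Icc ((v:ℝ)*ℓ) ((v:ℝ)*ℓ+ℓ) ∧
      |x - x'| ≤ 4*ℓ := by
  have hu5 : (u:ℝ) ≤ (v:ℝ) + 5 := by exact_mod_cast h1
  have hv5 : (v:ℝ) ≤ (u:ℝ) + 5 := by exact_mod_cast h2
  rcases le_total u v with h | h
  · have huv : (u:ℝ) ≤ (v:ℝ) := by exact_mod_cast h
    refine ⟨(u:ℝ)*ℓ+ℓ, (v:ℝ)*ℓ, ⟨by linarith, le_refl _⟩, ⟨le_refl _, by linarith⟩, ?_⟩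
    rw [abs_le]
    constructor <;> nlinarith
  · have huv : (v:ℝ) ≤ (u:ℝ) := by exact_mod_cast h
    refine ⟨(u:ℝ)*ℓ, (v:ℝ)*ℓ+ℓ, ⟨le_refl _, by linarith⟩, ⟨by linarith, le_refl _⟩, ?_⟩
    rw [abs_le]
    constructor <;> nlinarith

lemma dist_le_of_coords (p q : E2) (ℓ : ℝ) (hℓ : 0 ≤ ℓ)
    (h0 : |p 0 - q 0| ≤ 4*ℓ) (h1 : |p 1 - q 1| ≤ 4*ℓ) :
    dist p q ≤ 4 * Real.sqrt 2 * ℓ := by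
  rw [EuclideanSpace.dist_eq]
  have key : Real.sqrt (∑ i, dist (p i) (q i)^2) ≤ Real.sqrt (32*ℓ^2) := by
    apply Real.sqrt_le_sqrt
    rw [Fin.sum_univ_two, Real.dist_eq, Real.dist_eq]
    nlinarith [sq_abs (p 0 - q 0), sq_abs (p 1 - q 1),
      abs_nonneg (p 0 - q 0), abs_nonneg (p 1 - q 1)]
  refine key.trans_eq ?_
  have hs : Real.sqrt 2 ^ 2 = 2 := Real.sq_sqrt (by norm_num)
  rw [show (32:ℝ)*ℓ^2 = (4*Real.sqrt 2*ℓ)^2 by nlinarith]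
  exact Real.sqrt_sq (by positivity)

theorem stmt_8 (n : ℕ) (hn : 1 ≤ n) (S : Finset E2) (hcard : S.card = n ^ 2)
    (hU : ∀ p ∈ S, p ∈ unitSq) (hsmooth : IsSmooth (1/2) (4 * Real.sqrt 2) S)
    (i j m : ℕ) (hi : 1 ≤ i) (hj : j < 2 ^ i) (hm : m < 2 ^ i)
    (hmany : 100 * n < (S.filter (fun p => p ∈ TLcell (i-1) (j/2) (m/2))).card) :
    ∃ p ∈ S, p ∈ cell i j m := by
  classical
  obtain ⟨k, rfl⟩ : ∃ k, i = k + 1 := ⟨i - 1, by omega⟩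
  simp only [Nat.add_sub_cancel] at hmany
  set J : Finset (ℕ × ℕ) := (Finset.range (2^(k+1)) ×ˢ Finset.range (2^(k+1))).filter
    (fun q => q.1/2 ≤ j/2 + 2 ∧ j/2 ≤ q.1/2 + 2 ∧ q.2/2 ≤ m/2 + 2 ∧ m/2 ≤ q.2/2 + 2)
    with hJdef
  -- coverage of TL by the cells indexed by J
  have hcover : S.filter (fun p => p ∈ TLcell k (j/2) (m/2)) ⊆
      J.biUnion (fun q => S.filter (fun p => p ∈ cell (k+1) q.1 q.2)) := by
    intro p hp
    rw [Finset.mem_filter] at hp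
    obtain ⟨hpS, jQ, mQ, hjQ, hmQ, c1, c2, c3, c4, hx, hy⟩ := hp
    obtain ⟨c0, hc0div, hc0lt, hc0⟩ := child_interval k jQ (p 0) hx hjQ
    obtain ⟨d0, hd0div, hd0lt, hd0⟩ := child_interval k mQ (p 1) hy hmQ
    rw [Finset.mem_biUnion]
    refine ⟨(c0, d0), ?_, ?_⟩
    · rw [hJdef, Finset.mem_filter, Finset.mem_product, Finset.mem_range, Finset.mem_range]
      refine ⟨⟨hc0lt, hd0lt⟩, ?_, ?_, ?_, ?_⟩ <;> omega
    · exact Finset.mem_filter.mpr ⟨hpS, hc0, hd0⟩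
  have hJcard : J.card ≤ 100 := by
    have hsub : J ⊆ Finset.Icc (2*(j/2)-4) (2*(j/2)+5) ×ˢ Finset.Icc (2*(m/2)-4) (2*(m/2)+5) := by
      intro q hq
      rw [hJdef, Finset.mem_filter, Finset.mem_product, Finset.mem_range, Finset.mem_range] at hq
      rw [Finset.mem_product, Finset.mem_Icc, Finset.mem_Icc]
      omega
    refine le_trans (Finset.card_le_card hsub) ?_
    rw [Finset.card_product, Nat.card_Icc, Nat.card_Icc]
    have h1 : 2*(j/2)+5+1 - (2*(j/2)-4) ≤ 10 := by omega
    have h2 : 2*(m/2)+5+1 - (2*(m/2)-4) ≤ 10 := by omega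
    calc _ ≤ 10 * 10 := Nat.mul_le_mul h1 h2
    _ = 100 := by norm_num
  -- pigeonhole: some level-(k+1) cell indexed by J contains at least n points
  have hex : ∃ q ∈ J, n ≤ (S.filter (fun p => p ∈ cell (k+1) q.1 q.2)).card := by
    by_contra hcon
    push_neg at hcon
    have h1 : (S.filter (fun p => p ∈ TLcell k (j/2) (m/2))).card
        ≤ ∑ q ∈ J, (S.filter (fun p => p ∈ cell (k+1) q.1 q.2)).card :=
      le_trans (Finset.card_le_card hcover) Finset.card_biUnion_le
    have h2 : ∑ q ∈ J, (S.filter (fun p => p ∈ cell (k+1) q.1 q.2)).card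
        ≤ ∑ _q ∈ J, (n-1) :=
      Finset.sum_le_sum (fun q hq => by have := hcon q hq; omega)
    have h3 : ∑ _q ∈ J, (n-1) = J.card * (n-1) := by
      rw [Finset.sum_const, smul_eq_mul]
    have h4 : J.card * (n-1) ≤ 100 * (n-1) := Nat.mul_le_mul_right _ hJcard
    omega
  obtain ⟨⟨jQ, mQ⟩, hqJ, hcount⟩ := hex
  rw [hJdef, Finset.mem_filter, Finset.mem_product, Finset.mem_range, Finset.mem_range] at hqJ
  obtain ⟨⟨hjQlt, hmQlt⟩, cc1, cc2, cc3, cc4⟩ := hqJ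
  -- index distance at level k+1 is at most 5
  have hj5 : jQ ≤ j + 5 ∧ j ≤ jQ + 5 := by omega
  have hm5 : mQ ≤ m + 5 ∧ m ≤ mQ + 5 := by omega
  -- apply smoothness
  set ℓ : ℝ := 1/2^(k+1) with hℓdef
  have hℓpos : 0 < ℓ := by rw [hℓdef]; positivity
  have hmul : ∀ t : ℕ, (t:ℝ)/2^(k+1) = (t:ℝ) * ℓ := fun t => by rw [hℓdef]; ring
  have hQsub : square ((jQ:ℝ)/2^(k+1)) ((mQ:ℝ)/2^(k+1)) ℓ ⊆ unitSq :=
    cell_subset_unitSq (k+1) jQ mQ hjQlt hmQlt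
  have hRsub : square ((j:ℝ)/2^(k+1)) ((m:ℝ)/2^(k+1)) ℓ ⊆ unitSq :=
    cell_subset_unitSq (k+1) j m hj hm
  have hcnt : ((S.card : ℝ) : ℝ) ^ ((1:ℝ)/2) ≤
      ((S.filter (fun p => p ∈ square ((jQ:ℝ)/2^(k+1)) ((mQ:ℝ)/2^(k+1)) ℓ)).card : ℝ) := by
    have heq : ((S.card : ℝ)) ^ ((1:ℝ)/2) = (n:ℝ) := by
      rw [hcard]; push_cast
      rw [← Real.sqrt_eq_rpow, Real.sqrt_sq (by positivity)]
    rw [heq]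
    have : n ≤ (S.filter (fun p => p ∈ square ((jQ:ℝ)/2^(k+1)) ((mQ:ℝ)/2^(k+1)) ℓ)).card :=
      hcount
    exact_mod_cast this
  have hdist : ∃ q ∈ square ((jQ:ℝ)/2^(k+1)) ((mQ:ℝ)/2^(k+1)) ℓ,
      ∃ r ∈ square ((j:ℝ)/2^(k+1)) ((m:ℝ)/2^(k+1)) ℓ,
        dist q r ≤ (4 * Real.sqrt 2) * ℓ := by
    obtain ⟨x, x', hxmem, hx'mem, hxd⟩ := close_coords jQ j ℓ hℓpos hj5.1 hj5.2
    obtain ⟨y, y', hymem, hy'mem, hyd⟩ := close_coords mQ m ℓ hℓpos hm5.1 hm5.2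
    refine ⟨(WithLp.equiv 2 (Fin 2 → ℝ)).symm ![x, y], ?_,
      (WithLp.equiv 2 (Fin 2 → ℝ)).symm ![x', y'], ?_, ?_⟩
    · constructor
      · show x ∈ Set.Icc _ _
        rw [hmul]; exact hxmem
      · show y ∈ Set.Icc _ _
        rw [hmul]; exact hymem
    · constructor
      · show x' ∈ Set.Icc _ _
        rw [hmul]; exact hx'mem
      · show y' ∈ Set.Icc _ _
        rw [hmul]; exact hy'mem
    · exact dist_le_of_coords _ _ ℓ hℓpos.le hxd hyd
  have main := hsmooth ℓ ((jQ:ℝ)/2^(k+1)) ((mQ:ℝ)/2^(k+1)) ((j:ℝ)/2^(k+1)) ((m:ℝ)/2^(k+1))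
    hℓpos hQsub hRsub hcnt hdist
  exact main
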